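/- Let d be a positive integer and N = (N_1, …, N_d) with each N_i an integer greater than 1. Let σ: Ω_N → {1, …, |Ω_N|} assign to each point of Ω_N its rank in the lexicographic order on ℤ^d. Let A_N be the set system of all arithmetic progressions in Ω_N and M_N the set system of all maximal arithmetic progressions in Ω_N. Then disc(A_N) ≤ 2 · pdisc(M_N, σ). -/

import Mathlib

open scoped Pointwise BigOperators

noncomputable section

/-- The set system discrepancy: minimum over ±1 colorings of the maximum
imbalance of a set in the system. -/
def discSys {α : Type*} (𝒮 : Set (Set α)) : ℝ :=
  ⨅ χ : α → Bool, ⨆ S ∈ 𝒮, |∑ᶠ x ∈ S, (if χ x then (1 : ℝ) else -1)|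

/-- The arithmetic progression AP_d(a, b, ℓ) = {a + i b : 0 ≤ i < ℓ}. -/
def APset {d : ℕ} (a b : Fin d → ℤ) (ℓ : ℕ) : Set (Fin d → ℤ) :=
  { z | ∃ i : ℕ, i < ℓ ∧ z = a + (i : ℤ) • b }

/-- The grid [N₁] × ⋯ × [N_d]. -/
def OmegaN {d : ℕ} (N : Fin d → ℤ) : Set (Fin d → ℤ) :=
  { x | ∀ i, 1 ≤ x i ∧ x i ≤ N i }

/-- The family of arithmetic progressions restricted to the universe Ω. -/
def APsys {d : ℕ} (Ω : Set (Fin d → ℤ)) : Set (Set (Fin d → ℤ)) :=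
  { S | ∃ (a b : Fin d → ℤ) (ℓ : ℕ), 0 < ℓ ∧ S = Ω ∩ APset a b ℓ }

/-- f(N) = max over I ⊆ [d] of (∏_{i ∈ I} N_i)^(1/(2|I|+2)). -/
def fVec {d : ℕ} (N : Fin d → ℤ) : ℝ :=
  ⨆ I : Finset (Fin d), (∏ i ∈ I, (N i : ℝ)) ^ ((1 : ℝ) / (2 * (I.card : ℝ) + 2))

/-- A convex body: compact, convex, with nonempty interior. -/
def IsConvexBody {d : ℕ} (K : Set (Fin d → ℝ)) : Prop :=
  Convex ℝ K ∧ IsCompact K ∧ (interior K).Nonempty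

/-- The integer points in a subset of ℝ^d. -/
def intPoints {d : ℕ} (A : Set (Fin d → ℝ)) : Set (Fin d → ℤ) :=
  { x | (fun i => (x i : ℝ)) ∈ A }

/-- ζ_A(t) = number of integer points in t·A. -/
def zetaSet {d : ℕ} (A : Set (Fin d → ℝ)) (t : ℝ) : ℕ :=
  (intPoints (t • A)).ncard

/-- f(K) = √(s*) where s* = inf {s > 0 : ζ_{K−K}(1/s) ≤ s}. -/
def fBody {d : ℕ} (K : Set (Fin d → ℝ)) : ℝ :=
  Real.sqrt (sInf { s : ℝ | 0 < s ∧ (zetaSet (K - K) (1 / s) : ℝ) ≤ s })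

/-- γ₂ of the 0/1 incidence matrix of the set system 𝒮 with columns indexed by the
universe Ω: the infimum over factorizations of the product of the max row norm of the
left factor and max column norm of the right factor. -/
def gamma2S {α : Type*} (Ω : Set α) (𝒮 : Set (Set α)) : ℝ :=
  sInf { c : ℝ | ∃ (k : ℕ) (L : 𝒮 → Fin k → ℝ) (R : Fin k → Ω → ℝ),
    (∀ (S : 𝒮) (x : Ω), (∑ t, L S t * R t x) =
        Set.indicator (S : Set α) (fun _ => (1 : ℝ)) (x : α)) ∧
    c = (⨆ S : 𝒮, Real.sqrt (∑ t, L S t ^ 2)) * (⨆ x : Ω, Real.sqrt (∑ t, R t x ^ 2)) }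

/-- γ₂ of a real matrix. -/
def gamma2M {m n : ℕ} (A : Matrix (Fin m) (Fin n) ℝ) : ℝ :=
  sInf { c : ℝ | ∃ (k : ℕ) (L : Matrix (Fin m) (Fin k) ℝ) (R : Matrix (Fin k) (Fin n) ℝ),
    A = L * R ∧
    c = (⨆ i : Fin m, Real.sqrt (∑ t, L i t ^ 2)) * (⨆ j : Fin n, Real.sqrt (∑ t, R t j ^ 2)) }

/-- Prefix discrepancy of a matrix. -/
def pdiscM {m n : ℕ} (A : Matrix (Fin m) (Fin n) ℝ) : ℝ :=
  ⨅ x : Fin n → Bool, ⨆ j : Fin n, ⨆ r : Fin m,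
    |∑ i ∈ Finset.univ.filter (fun i : Fin n => i ≤ j),
        (if x i then (1 : ℝ) else -1) * A r i|

/-- Prefix discrepancy of a set system on universe Ω with respect to the ordering σ. -/
def pdiscS {α : Type*} (Ω : Set α) (𝒮 : Set (Set α)) (σ : α → ℕ) : ℝ :=
  ⨅ χ : α → Bool, ⨆ j : ℕ, ⨆ S ∈ 𝒮,
    |∑ᶠ x ∈ {y ∈ Ω | y ∈ S ∧ σ y ≤ j}, (if χ x then (1 : ℝ) else -1)|

/-- The maximal arithmetic progression in Ω_N with difference b through a:
the residue class of a mod b intersected with Ω_N. -/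
def MAPN {d : ℕ} (N : Fin d → ℤ) (a b : Fin d → ℤ) : Set (Fin d → ℤ) :=
  { z | ∃ i : ℤ, z = a + i • b } ∩ OmegaN N

/-- The maximal arithmetic progression inside the convex body K with difference b
through a: the residue class of a mod b intersected with the integer points of K. -/
def MAPK {d : ℕ} (K : Set (Fin d → ℝ)) (a b : Fin d → ℤ) : Set (Fin d → ℤ) :=
  { z | ∃ i : ℤ, z = a + i • b } ∩ intPoints K

/-- The lexicographic order on ℤ^d. -/
def lexLe {d : ℕ} (x y : Fin d → ℤ) : Prop :=
  x = y ∨ ∃ i : Fin d, (∀ j : Fin d, j < i → x j = y j) ∧ x i < y i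

end


/-! Orient the difference `b` of an arithmetic progression `a, a + b, …, a + (ℓ - 1) b` so that
`b` is lexicographically nonnegative. Along the residue class of `a` modulo `b` the lexicographic
order is then the order of the index, so inside the grid the progression is the part of the
maximal progression lying lexicographically in `[a, a + (ℓ - 1) b]`: the difference of two
prefixes of that maximal progression in the lexicographic ranking. Hence a colouring whose prefix
discrepancy on maximal progressions is `D` has discrepancy at most `2 D` on all progressions. -/

section Prefix

variable {α : Type*}

theorem abs_finsum_mem_le_finsum_mem_abs_of_subset {Ω A : Set α} (hΩ : Ω.Finite) (hA : A ⊆ Ω)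
    (f : α → ℝ) : |∑ᶠ x ∈ A, f x| ≤ ∑ᶠ x ∈ Ω, |f x| := by
  have hAfin := hΩ.subset hA
  rw [finsum_mem_eq_finite_toFinset_sum _ hAfin, finsum_mem_eq_finite_toFinset_sum _ hΩ]
  exact (Finset.abs_sum_le_sum_abs _ _).trans <| Finset.sum_le_sum_of_subset_of_nonneg
    (Set.Finite.toFinset_subset_toFinset.2 hA) fun _ _ _ => abs_nonneg _

theorem abs_finsum_prefix_le_iSup {Ω : Set α} (hΩ : Ω.Finite) {𝒮 : Set (Set α)} {S : Set α}
    (hS : S ∈ 𝒮) (σ : α → ℕ) (f : α → ℝ) (j : ℕ) :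
    |∑ᶠ x ∈ {y ∈ Ω | y ∈ S ∧ σ y ≤ j}, f x| ≤
      ⨆ j : ℕ, ⨆ S ∈ 𝒮, |∑ᶠ x ∈ {y ∈ Ω | y ∈ S ∧ σ y ≤ j}, f x| := by
  have hbound : ∀ (j : ℕ) (S : Set α),
      |∑ᶠ x ∈ {y ∈ Ω | y ∈ S ∧ σ y ≤ j}, f x| ≤ ∑ᶠ x ∈ Ω, |f x| := fun _ _ =>
    abs_finsum_mem_le_finsum_mem_abs_of_subset hΩ (Set.sep_subset _ _) f
  have hnonneg : 0 ≤ ∑ᶠ x ∈ Ω, |f x| :=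
    finsum_nonneg fun _ => finsum_nonneg fun _ => abs_nonneg _
  refine le_ciSup_of_le ⟨_, Set.forall_mem_range.2 fun j => Real.iSup_le
    (fun S => Real.iSup_le (fun _ => hbound j S) hnonneg) hnonneg⟩ j ?_
  refine le_ciSup_of_le ⟨_, Set.forall_mem_range.2 fun S => Real.iSup_le
    (fun _ => hbound j S) hnonneg⟩ S ?_
  exact le_ciSup_of_le ⟨_, Set.forall_mem_range.2 fun _ => le_rfl⟩ hS le_rfl

theorem finsum_mem_prefix_sdiff {Ω : Set α} (hΩ : Ω.Finite) (S : Set α) (σ : α → ℕ)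
    (f : α → ℝ) (j₁ j₂ : ℕ) :
    ∑ᶠ x ∈ {y ∈ Ω | y ∈ S ∧ σ y ≤ j₂} \ {y ∈ Ω | y ∈ S ∧ σ y ≤ j₁}, f x =
      ∑ᶠ x ∈ {y ∈ Ω | y ∈ S ∧ σ y ≤ j₂}, f x - ∑ᶠ x ∈ {y ∈ Ω | y ∈ S ∧ σ y ≤ min j₂ j₁}, f x := by
  have hinter : {y ∈ Ω | y ∈ S ∧ σ y ≤ j₂} ∩ {y ∈ Ω | y ∈ S ∧ σ y ≤ j₁} =
      {y ∈ Ω | y ∈ S ∧ σ y ≤ min j₂ j₁} := by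
    ext y
    simp only [Set.mem_inter_iff, Set.mem_ofPred_eq, le_min_iff]
    tauto
  rw [← finsum_mem_inter_add_sdiff {y ∈ Ω | y ∈ S ∧ σ y ≤ j₁} (hΩ.subset (Set.sep_subset _ _)),
    hinter, add_sub_cancel_left]

theorem discSys_le_two_mul_pdiscS {Ω : Set α} (hΩ : Ω.Finite) {𝒜 𝒮 : Set (Set α)}
    (σ : α → ℕ) (h𝒜 : ∀ A ∈ 𝒜, ∃ S ∈ 𝒮, ∃ j₁ j₂ : ℕ,
      A = {y ∈ Ω | y ∈ S ∧ σ y ≤ j₂} \ {y ∈ Ω | y ∈ S ∧ σ y ≤ j₁}) :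
    discSys 𝒜 ≤ 2 * pdiscS Ω 𝒮 σ := by
  unfold discSys pdiscS
  rw [Real.mul_iInf_of_nonneg zero_le_two]
  refine ciInf_mono ⟨0, Set.forall_mem_range.2 fun χ => Real.iSup_nonneg fun A =>
    Real.iSup_nonneg fun _ => abs_nonneg _⟩ fun χ => ?_
  set G := ⨆ j : ℕ, ⨆ S ∈ 𝒮,
    |∑ᶠ x ∈ {y ∈ Ω | y ∈ S ∧ σ y ≤ j}, (if χ x then (1 : ℝ) else -1)|
  have hG : 0 ≤ 2 * G := mul_nonneg zero_le_two <| Real.iSup_nonneg fun _ =>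
    Real.iSup_nonneg fun _ => Real.iSup_nonneg fun _ => abs_nonneg _
  refine Real.iSup_le (fun A => Real.iSup_le (fun hA => ?_) hG) hG
  obtain ⟨S, hS, j₁, j₂, rfl⟩ := h𝒜 A hA
  rw [finsum_mem_prefix_sdiff hΩ, two_mul]
  exact (abs_sub _ _).trans (add_le_add (abs_finsum_prefix_le_iSup hΩ hS σ _ j₂)
    (abs_finsum_prefix_le_iSup hΩ hS σ _ _))


theorem ncard_le_ncard_iff_of_isLowerSet {β γ : Type*} [LinearOrder γ] (f : β → γ) {Ω : Set β}
    (hΩ : Ω.Finite) {s : Set γ} (hs : IsLowerSet s) {y : β} (hy : y ∈ Ω) :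
    {z ∈ Ω | f z ≤ f y}.ncard ≤ {z ∈ Ω | f z ∈ s}.ncard ↔ f y ∈ s := by
  constructor
  · intro hle
    by_contra hys
    have hsub : {z ∈ Ω | f z ∈ s} ⊂ {z ∈ Ω | f z ≤ f y} := by
      have hsubset : {z ∈ Ω | f z ∈ s} ⊆ {z ∈ Ω | f z ≤ f y} := fun z hz =>
        ⟨hz.1, le_of_not_gt fun hyz => hys (hs hyz.le hz.2)⟩
      exact (Set.ssubset_iff_of_subset hsubset).2 ⟨y, ⟨hy, le_rfl⟩, fun h => hys h.2⟩
    exact (Set.ncard_lt_ncard hsub (hΩ.subset (Set.sep_subset _ _))).not_ge hle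
  · intro hys
    exact Set.ncard_le_ncard (fun z ⟨hz, hzy⟩ => ⟨hz, hs hzy hys⟩) (hΩ.subset (Set.sep_subset _ _))

theorem exists_nat_lt_add_zsmul_eq_iff {G : Type*} [AddCommGroup G] [LinearOrder G]
    [IsOrderedAddMonoid G] {b : G} (hb : 0 ≤ b) (a : G) {ℓ : ℕ} (hℓ : 0 < ℓ) (i : ℤ) :
    (∃ k : ℕ, k < ℓ ∧ a + i • b = a + (k : ℤ) • b) ↔
      a + i • b ∈ Set.Icc a (a + ((ℓ - 1 : ℕ) : ℤ) • b) := by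
  rcases hb.eq_or_lt with rfl | hb
  · simpa using ⟨0, hℓ⟩
  rw [Set.mem_Icc, le_add_iff_nonneg_right, add_le_add_iff_left, ← zero_zsmul b,
    zsmul_le_zsmul_iff_left hb, zsmul_le_zsmul_iff_left hb]
  simp only [add_right_inj, zsmul_left_inj hb]
  constructor
  · rintro ⟨k, hk, rfl⟩
    omega
  · rintro ⟨h0, hi⟩
    exact ⟨i.toNat, by omega, by omega⟩

section Lex

variable {d : ℕ}

theorem lexLe_iff_toLex_le (x y : Fin d → ℤ) : lexLe x y ↔ toLex x ≤ toLex y := by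
  rw [le_iff_eq_or_lt]
  rfl

theorem omegaN_finite (N : Fin d → ℤ) : (OmegaN N).Finite :=
  (Set.finite_Icc (1 : Fin d → ℤ) N).subset fun _ hx => ⟨fun i => (hx i).1, fun i => (hx i).2⟩

theorem APset_eq_APset_neg (a b : Fin d → ℤ) (ℓ : ℕ) :
    APset a b ℓ = APset (a + ((ℓ - 1 : ℕ) : ℤ) • b) (-b) ℓ := by
  ext z
  constructor <;>
  · rintro ⟨i, hi, rfl⟩
    refine ⟨ℓ - 1 - i, by omega, ?_⟩
    rw [show ((ℓ - 1 - i : ℕ) : ℤ) = ((ℓ - 1 : ℕ) : ℤ) - i by omega]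
    module

noncomputable def lexRank (N x : Fin d → ℤ) : ℕ := {y ∈ OmegaN N | lexLe y x}.ncard

theorem lexRank_le_iff {N y : Fin d → ℤ} (hy : y ∈ OmegaN N) {s : Set (Lex (Fin d → ℤ))}
    (hs : IsLowerSet s) : lexRank N y ≤ {z ∈ OmegaN N | toLex z ∈ s}.ncard ↔ toLex y ∈ s := by
  simp only [lexRank, lexLe_iff_toLex_le]
  exact ncard_le_ncard_iff_of_isLowerSet toLex (omegaN_finite N) hs hy

theorem inter_APset_eq_prefix_sdiff (N a : Fin d → ℤ) {b : Fin d → ℤ} (hb : 0 ≤ toLex b)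
    {ℓ : ℕ} (hℓ : 0 < ℓ) :
    OmegaN N ∩ APset a b ℓ =
      {y ∈ OmegaN N | y ∈ MAPN N a b ∧ lexRank N y ≤
          {z ∈ OmegaN N | toLex z ∈ Set.Iic (toLex (a + ((ℓ - 1 : ℕ) : ℤ) • b))}.ncard} \
        {y ∈ OmegaN N | y ∈ MAPN N a b ∧ lexRank N y ≤
          {z ∈ OmegaN N | toLex z ∈ Set.Iio (toLex a)}.ncard} := by
  ext y
  by_cases hy : y ∈ OmegaN N
  swap
  · simp [hy]
  simp only [Set.mem_inter_iff, Set.mem_sdiff, Set.mem_ofPred_eq, MAPN, APset, hy,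
    lexRank_le_iff hy (isLowerSet_Iic _), lexRank_le_iff hy (isLowerSet_Iio _), true_and,
    and_true]
  simp only [Set.mem_Iio]
  have hAP := exists_nat_lt_add_zsmul_eq_iff hb (toLex a) hℓ
  constructor
  · rintro ⟨k, hk, rfl⟩
    have hk' := (hAP k).1 ⟨k, hk, rfl⟩
    exact ⟨⟨⟨k, rfl⟩, hk'.2⟩, fun h => hk'.1.not_gt h.2⟩
  · rintro ⟨⟨⟨i, rfl⟩, hlast⟩, hfirst⟩
    obtain ⟨k, hk, he⟩ := (hAP i).2 ⟨le_of_not_gt fun h => hfirst ⟨⟨i, rfl⟩, h⟩, hlast⟩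
    exact ⟨k, hk, he⟩

theorem exists_MAPN_prefix_sdiff (N : Fin d → ℤ) {A : Set (Fin d → ℤ)}
    (hA : A ∈ APsys (OmegaN N)) :
    ∃ S ∈ {S | ∃ a b : Fin d → ℤ, S = MAPN N a b}, ∃ j₁ j₂ : ℕ,
      A = {y ∈ OmegaN N | y ∈ S ∧ lexRank N y ≤ j₂} \
        {y ∈ OmegaN N | y ∈ S ∧ lexRank N y ≤ j₁} := by
  obtain ⟨a, b, ℓ, hℓ, rfl⟩ := hA
  obtain ⟨a', b', hb', hAP⟩ :
      ∃ a' b' : Fin d → ℤ, 0 ≤ toLex b' ∧ APset a b ℓ = APset a' b' ℓ := by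
    rcases le_total 0 (toLex b) with hb | hb
    · exact ⟨a, b, hb, rfl⟩
    · exact ⟨_, -b, neg_nonneg.2 hb, APset_eq_APset_neg a b ℓ⟩
  exact ⟨MAPN N a' b', ⟨a', b', rfl⟩, _, _, hAP ▸ inter_APset_eq_prefix_sdiff N a' hb' hℓ⟩

end Lex

theorem stmt15_general (d : ℕ) (N : Fin d → ℤ) :
    discSys (APsys (OmegaN N)) ≤
      2 * pdiscS (OmegaN N) {S | ∃ a b : Fin d → ℤ, S = MAPN N a b}
        (fun x => {y ∈ OmegaN N | lexLe y x}.ncard) :=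
  discSys_le_two_mul_pdiscS (omegaN_finite N) (lexRank N) fun _ => exists_MAPN_prefix_sdiff N

/-- with σ the lexicographic rank on Ω_N,
disc(A_N) ≤ 2 · pdisc(M_N, σ). -/
theorem stmt15 (d : ℕ) (hd : 0 < d) (N : Fin d → ℤ) (hN : ∀ i, 1 < N i) :
    discSys (APsys (OmegaN N)) ≤
      2 * pdiscS (OmegaN N) {S | ∃ a b : Fin d → ℤ, S = MAPN N a b}
        (fun x => {y ∈ OmegaN N | lexLe y x}.ncard) :=
  stmt15_general d N
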